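/- (Proposition 1(ii).) Assume L ≥ L_f̃ and fix ρ > 0. Let {V^l}_{l≥0} ⊂ S be generated by iterating the algorithmic update V^{l+1} := Proj_S(G(V^l)) (assume every column of each G(V^l) is nonzero). Then the sequence {V^l} is bounded, the sequence of penalized objective values {Φ_ρ(V^l)}_{l≥0} is nonincreasing, and it converges to a finite limit. -/

import Mathlib

open Matrix

noncomputable section

/-- Squared Frobenius norm `‖A‖_F²`. -/
def frobSq {a b : ℕ} (A : Matrix (Fin a) (Fin b) ℝ) : ℝ := ∑ i, ∑ j, A i j ^ 2

/-- Frobenius norm `‖A‖_F`. -/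
def frobNorm {a b : ℕ} (A : Matrix (Fin a) (Fin b) ℝ) : ℝ := Real.sqrt (frobSq A)

/-- Trace (Frobenius) inner product `⟨A,B⟩ = tr(AᵀB)`. -/
def frobInner {a b : ℕ} (A B : Matrix (Fin a) (Fin b) ℝ) : ℝ := ∑ i, ∑ j, A i j * B i j

/-- Squared spectral norm: `sup {‖Vx‖₂² : ‖x‖₂ = 1}`. -/
def specSq {a b : ℕ} (V : Matrix (Fin a) (Fin b) ℝ) : ℝ :=
  sSup {c | ∃ x : Fin b → ℝ, (∑ j, x j ^ 2) = 1 ∧ c = ∑ i, (∑ j, V i j * x j) ^ 2}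

/-- Spectral norm (largest singular value). -/
def specNorm {a b : ℕ} (V : Matrix (Fin a) (Fin b) ℝ) : ℝ := Real.sqrt (specSq V)

/-- Membership in `S`: all columns have unit Euclidean norm. -/
def unitCols {a b : ℕ} (V : Matrix (Fin a) (Fin b) ℝ) : Prop :=
  ∀ j, ∑ i, V i j ^ 2 = 1

/-- Column-wise normalization to unit Euclidean norm (projection onto `S`). -/
def normalizeCols {a b : ℕ} (G : Matrix (Fin a) (Fin b) ℝ) : Matrix (Fin a) (Fin b) ℝ :=
  Matrix.of fun i j => G i j / Real.sqrt (∑ i', G i' j ^ 2)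

/-- `u` is a unit eigenvector of `VᵀV` associated with its largest eigenvalue `lam`
(the Rayleigh-quotient bound states that `lam` is the largest eigenvalue). -/
def isTopEigen {a b : ℕ} (V : Matrix (Fin a) (Fin b) ℝ) (lam : ℝ) (u : Fin b → ℝ) : Prop :=
  (∑ j, u j ^ 2) = 1 ∧ (Vᵀ * V) *ᵥ u = lam • u ∧
    ∀ x : Fin b → ℝ, x ⬝ᵥ ((Vᵀ * V) *ᵥ x) ≤ lam * (x ⬝ᵥ x)

/-- `Γ(V) = −2 V u uᵀ` where `u = u₁(V)`. -/
def GammaOf {a b : ℕ} (V : Matrix (Fin a) (Fin b) ℝ) (u : Fin b → ℝ) :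
    Matrix (Fin a) (Fin b) ℝ := (-2 : ℝ) • (V * vecMulVec u u)

/-- The update direction `G(V) = (2ρ+L)⁻¹ (L V − ∇f̃(V) − ρ Γ(V))`. -/
def Gmap {a b : ℕ} (gradf : Matrix (Fin a) (Fin b) ℝ → Matrix (Fin a) (Fin b) ℝ)
    (ρ L : ℝ) (V : Matrix (Fin a) (Fin b) ℝ) (u : Fin b → ℝ) : Matrix (Fin a) (Fin b) ℝ :=
  (2 * ρ + L)⁻¹ • (L • V - gradf V - ρ • GammaOf V u)

/-- Penalized objective `Φ_ρ(V) = f̃(V) + ρ(‖V‖_F² − ‖V‖²)`. -/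
def Phi {a b : ℕ} (f : Matrix (Fin a) (Fin b) ℝ → ℝ) (ρ : ℝ)
    (V : Matrix (Fin a) (Fin b) ℝ) : ℝ := f V + ρ * (frobSq V - specSq V)

/-- Stationarity residual `𝒢_ρ(V,Γ) = inf_t ‖∇f̃(V) + 2ρV + ρΓ + V·Diag(t)‖_F`. -/
def Gres {a b : ℕ} (gradf : Matrix (Fin a) (Fin b) ℝ → Matrix (Fin a) (Fin b) ℝ) (ρ : ℝ)
    (V Γ : Matrix (Fin a) (Fin b) ℝ) : ℝ :=
  ⨅ t : Fin b → ℝ, frobNorm (gradf V + (2 * ρ) • V + ρ • Γ + V * Matrix.diagonal t)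

/-- The all-ones matrix `E` scaled by `1/√m`. -/
def Escaled (a b : ℕ) : Matrix (Fin a) (Fin b) ℝ :=
  (Real.sqrt a)⁻¹ • Matrix.of fun _ _ => (1 : ℝ)

attribute [local instance] Matrix.frobeniusNormedAddCommGroup Matrix.frobeniusNormedSpace

/-- The continuous linear functional `W ↦ ⟨A, W⟩` (Frobenius pairing); used to state that
`∇f̃` is the gradient of `f̃` with respect to the trace inner product. -/
def frobCLM {a b : ℕ} (A : Matrix (Fin a) (Fin b) ℝ) :
    Matrix (Fin a) (Fin b) ℝ →L[ℝ] ℝ :=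
  LinearMap.toContinuousLinearMap
    { toFun := fun W => frobInner A W
      map_add' := fun W W' => by
        simp [frobInner, Matrix.add_apply, mul_add, Finset.sum_add_distrib]
      map_smul' := fun c W => by
        simp [frobInner, Matrix.smul_apply, smul_eq_mul, Finset.mul_sum, mul_left_comm] }

/-! On `S` the Frobenius norm is constant (`‖V‖_F² = p`), so the iterates are bounded and only
`f̃ - ρ‖·‖²` varies. One step decreases `Φ_ρ` by at least `(L - L_f̃)/2 ‖V⁺ - V‖_F²`: since `V⁺`
maximises `⟨G(V), ·⟩` over `S`, the linearisation `⟨∇f̃(V) + ρΓ(V), V⁺ - V⟩` is at most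
`L⟨V, V⁺ - V⟩ = -(L/2)‖V⁺ - V‖_F²`; the descent lemma bounds `f̃(V⁺)` by its linearisation plus
`(L_f̃/2)‖V⁺ - V‖_F²`; and `-Γ(V)` is a subgradient of the convex function `‖·‖²` at `V`.
Finally `Φ_ρ ≥ f̃` is bounded below on the compact set `S`, so the nonincreasing values converge. -/

theorem image_add_le_of_lipschitz_fderiv {E : Type*} [NormedAddCommGroup E] [NormedSpace ℝ E]
    {f : E → ℝ} {f' : E → E →L[ℝ] ℝ} {K : ℝ} (hf : ∀ x, HasFDerivAt f (f' x) x)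
    (hK : ∀ x y d, f' x d - f' y d ≤ K * ‖x - y‖ * ‖d‖) (x d : E) :
    f (x + d) ≤ f x + f' x d + K / 2 * ‖d‖ ^ 2 := by
  set φ : ℝ → ℝ := fun t => f (x + t • d) - t * f' x d - K / 2 * t ^ 2 * ‖d‖ ^ 2
  have hφ : ∀ t, HasDerivAt φ (f' (x + t • d) d - f' x d - K * t * ‖d‖ ^ 2) t := by
    intro t
    have hpath : HasDerivAt (fun s : ℝ => x + s • d) d t := by
      simpa using ((hasDerivAt_id t).smul_const d).const_add x
    refine ((((hf _).comp_hasDerivAt t hpath).sub ((hasDerivAt_id t).mul_const (f' x d))).sub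
      (((hasDerivAt_pow 2 t).const_mul (K / 2)).mul_const (‖d‖ ^ 2))).congr_deriv ?_
    simp only [Nat.cast_ofNat, one_mul]
    ring
  have hφ' : ∀ t ∈ interior (Set.Icc (0 : ℝ) 1),
      f' (x + t • d) d - f' x d - K * t * ‖d‖ ^ 2 ≤ 0 := by
    intro t ht
    rw [interior_Icc] at ht
    have hgap := hK (x + t • d) x d
    rw [add_sub_cancel_left, norm_smul, Real.norm_of_nonneg ht.1.le] at hgap
    linarith
  have hanti := antitoneOn_of_hasDerivWithinAt_nonpos (convex_Icc 0 1)
    (fun t _ => (hφ t).continuousAt.continuousWithinAt) (fun t _ => (hφ t).hasDerivWithinAt) hφ'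
  have h10 := hanti (Set.left_mem_Icc.2 zero_le_one) (Set.right_mem_Icc.2 zero_le_one) zero_le_one
  simp only [φ, one_smul, zero_smul, add_zero] at h10
  linarith

variable {a b : ℕ}

section Frobenius

lemma frobSq_nonneg (A : Matrix (Fin a) (Fin b) ℝ) : 0 ≤ frobSq A :=
  Finset.sum_nonneg fun _ _ => Finset.sum_nonneg fun _ _ => sq_nonneg _

lemma frobInner_self (A : Matrix (Fin a) (Fin b) ℝ) : frobInner A A = frobSq A := by
  simp only [frobInner, frobSq, sq]

lemma frobInner_comm (A B : Matrix (Fin a) (Fin b) ℝ) : frobInner A B = frobInner B A := by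
  simp only [frobInner, mul_comm]

lemma frobInner_sub_left (A B C : Matrix (Fin a) (Fin b) ℝ) :
    frobInner (A - B) C = frobInner A C - frobInner B C := by
  simp only [frobInner, Matrix.sub_apply, sub_mul, Finset.sum_sub_distrib]

lemma frobInner_sub_right (A B C : Matrix (Fin a) (Fin b) ℝ) :
    frobInner A (B - C) = frobInner A B - frobInner A C := by
  simp only [frobInner, Matrix.sub_apply, mul_sub, Finset.sum_sub_distrib]

lemma frobInner_smul_left (c : ℝ) (A B : Matrix (Fin a) (Fin b) ℝ) :
    frobInner (c • A) B = c * frobInner A B := by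
  simp only [frobInner, Matrix.smul_apply, smul_eq_mul, Finset.mul_sum, mul_assoc]

lemma frobNorm_eq_norm (A : Matrix (Fin a) (Fin b) ℝ) : frobNorm A = ‖A‖ := by
  rw [frobenius_norm_def, frobNorm, frobSq, Real.sqrt_eq_rpow]
  simp only [Real.rpow_two, Real.norm_eq_abs, sq_abs]

lemma frobSq_eq_norm_sq (A : Matrix (Fin a) (Fin b) ℝ) : frobSq A = ‖A‖ ^ 2 := by
  rw [← frobNorm_eq_norm, frobNorm, Real.sq_sqrt (frobSq_nonneg A)]

lemma frobInner_le_norm_mul_norm (A B : Matrix (Fin a) (Fin b) ℝ) :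
    frobInner A B ≤ ‖A‖ * ‖B‖ := by
  rw [← frobNorm_eq_norm, ← frobNorm_eq_norm, frobNorm, frobNorm, frobInner, frobSq, frobSq]
  simp only [← Finset.sum_product']
  exact Real.sum_mul_le_sqrt_mul_sqrt _ _ _

lemma image_add_le_frobInner {f : Matrix (Fin a) (Fin b) ℝ → ℝ}
    {gradf : Matrix (Fin a) (Fin b) ℝ → Matrix (Fin a) (Fin b) ℝ} {Lf : ℝ}
    (hderiv : ∀ W, HasFDerivAt f (frobCLM (gradf W)) W)
    (hlip : ∀ W W', frobNorm (gradf W - gradf W') ≤ Lf * frobNorm (W - W'))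
    (V D : Matrix (Fin a) (Fin b) ℝ) :
    f (V + D) ≤ f V + frobInner (gradf V) D + Lf / 2 * frobSq D := by
  rw [frobSq_eq_norm_sq]
  refine image_add_le_of_lipschitz_fderiv hderiv (fun W W' D => ?_) V D
  calc frobInner (gradf W) D - frobInner (gradf W') D = frobInner (gradf W - gradf W') D :=
        (frobInner_sub_left _ _ _).symm
    _ ≤ ‖gradf W - gradf W'‖ * ‖D‖ := frobInner_le_norm_mul_norm _ _
    _ ≤ Lf * ‖W - W'‖ * ‖D‖ := by
        gcongr
        simpa only [frobNorm_eq_norm] using hlip W W'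

end Frobenius

section Columns

lemma unitCols_normalizeCols (G : Matrix (Fin a) (Fin b) ℝ) (h : ∀ j, ∃ i, G i j ≠ 0) :
    unitCols (normalizeCols G) := by
  intro j
  obtain ⟨i₀, hi₀⟩ := h j
  have hpos : 0 < ∑ i, G i j ^ 2 :=
    Finset.sum_pos' (fun i _ => sq_nonneg _) ⟨i₀, Finset.mem_univ _, by positivity⟩
  simp only [normalizeCols, of_apply, div_pow, Real.sq_sqrt hpos.le, ← Finset.sum_div,
    div_self hpos.ne']

lemma frobSq_eq_of_unitCols {V : Matrix (Fin a) (Fin b) ℝ} (hV : unitCols V) : frobSq V = b := by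
  simp [frobSq, Finset.sum_comm (γ := Fin a), hV _]

lemma frobInner_le_frobInner_normalizeCols (G : Matrix (Fin a) (Fin b) ℝ)
    {W : Matrix (Fin a) (Fin b) ℝ} (hW : unitCols W) :
    frobInner G W ≤ frobInner G (normalizeCols G) := by
  simp only [frobInner, Finset.sum_comm (γ := Fin a)]
  refine Finset.sum_le_sum fun j _ => ?_
  have hG : ∑ i, G i j * normalizeCols G i j = √(∑ i, G i j ^ 2) := by
    simp only [normalizeCols, of_apply, ← mul_div_assoc, ← Finset.sum_div, ← sq]
    exact Real.div_sqrt
  calc ∑ i, G i j * W i j ≤ √(∑ i, G i j ^ 2) * √(∑ i, W i j ^ 2) :=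
        Real.sum_mul_le_sqrt_mul_sqrt _ _ _
    _ = ∑ i, G i j * normalizeCols G i j := by rw [hW j, Real.sqrt_one, mul_one, hG]

lemma isCompact_setOf_unitCols : IsCompact {V : Matrix (Fin a) (Fin b) ℝ | unitCols V} := by
  refine Metric.isCompact_of_isClosed_isBounded ?_ ?_
  · simp only [unitCols, Set.ofPred_forall]
    exact isClosed_iInter fun j => isClosed_eq
      (continuous_finsetSum _ fun i _ => (continuous_id.matrix_elem i j).pow 2) continuous_const
  · refine isBounded_iff_forall_norm_le.2 ⟨√b, fun V hV => ?_⟩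
    rw [← frobNorm_eq_norm, frobNorm, frobSq_eq_of_unitCols hV]

end Columns

section Spectral

lemma sum_sq_le_frobSq (W : Matrix (Fin a) (Fin b) ℝ) {x : Fin b → ℝ} (hx : ∑ j, x j ^ 2 = 1) :
    ∑ i, (∑ j, W i j * x j) ^ 2 ≤ frobSq W := by
  refine Finset.sum_le_sum fun i _ => ?_
  simpa only [hx, mul_one] using Finset.sum_mul_sq_le_sq_mul_sq Finset.univ (W i) x

lemma le_specSq (W : Matrix (Fin a) (Fin b) ℝ) {x : Fin b → ℝ} (hx : ∑ j, x j ^ 2 = 1) :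
    ∑ i, (∑ j, W i j * x j) ^ 2 ≤ specSq W :=
  le_csSup ⟨frobSq W, by rintro c ⟨y, hy, rfl⟩; exact sum_sq_le_frobSq W hy⟩ ⟨x, hx, rfl⟩

lemma specSq_le_frobSq (W : Matrix (Fin a) (Fin b) ℝ) : specSq W ≤ frobSq W :=
  Real.sSup_le (by rintro c ⟨x, hx, rfl⟩; exact sum_sq_le_frobSq W hx) (frobSq_nonneg W)

lemma dotProduct_transpose_mul_self_mulVec (V : Matrix (Fin a) (Fin b) ℝ) (x : Fin b → ℝ) :
    x ⬝ᵥ ((Vᵀ * V) *ᵥ x) = ∑ i, (∑ j, V i j * x j) ^ 2 := by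
  rw [← mulVec_mulVec, dotProduct_mulVec, vecMul_transpose]
  simp [dotProduct, mulVec, sq]

lemma isTopEigen.sum_sq_eq {V : Matrix (Fin a) (Fin b) ℝ} {lam : ℝ} {u : Fin b → ℝ}
    (h : isTopEigen V lam u) : ∑ i, (∑ j, V i j * u j) ^ 2 = lam := by
  obtain ⟨hu, heig, -⟩ := h
  rw [← dotProduct_transpose_mul_self_mulVec, heig, dotProduct_smul, smul_eq_mul]
  simp [dotProduct, ← sq, hu]

lemma isTopEigen.specSq_eq {V : Matrix (Fin a) (Fin b) ℝ} {lam : ℝ} {u : Fin b → ℝ}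
    (h : isTopEigen V lam u) : specSq V = lam := by
  refine IsGreatest.csSup_eq ⟨⟨u, h.1, h.sum_sq_eq.symm⟩, ?_⟩
  rintro c ⟨x, hx, rfl⟩
  simpa [← dotProduct_transpose_mul_self_mulVec, dotProduct, ← sq, hx] using h.2.2 x

lemma frobInner_GammaOf (V : Matrix (Fin a) (Fin b) ℝ) (u : Fin b → ℝ)
    (D : Matrix (Fin a) (Fin b) ℝ) :
    frobInner (GammaOf V u) D = -2 * ∑ i, (∑ k, V i k * u k) * (∑ j, D i j * u j) := by
  simp only [frobInner, GammaOf, Matrix.smul_apply, mul_apply, vecMulVec_apply, smul_eq_mul,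
    Finset.mul_sum, Finset.sum_mul]
  exact Finset.sum_congr rfl fun i _ => Finset.sum_congr rfl fun k _ =>
    Finset.sum_congr rfl fun j _ => by ring

/-- The subgradient inequality for the convex function `‖·‖²` at `V`, with subgradient
`-Γ(V) = 2 V u uᵀ`. -/
lemma isTopEigen.specSq_sub_frobInner_GammaOf_le {V : Matrix (Fin a) (Fin b) ℝ} {lam : ℝ}
    {u : Fin b → ℝ} (h : isTopEigen V lam u) (W : Matrix (Fin a) (Fin b) ℝ) :
    specSq V - frobInner (GammaOf V u) (W - V) ≤ specSq W := by
  have hsq : ∀ i, 2 * ((∑ k, V i k * u k) * ∑ j, W i j * u j) - (∑ k, V i k * u k) ^ 2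
      ≤ (∑ j, W i j * u j) ^ 2 := fun i => by
    nlinarith [sq_nonneg ((∑ j, W i j * u j) - ∑ k, V i k * u k)]
  have hsum := (Finset.sum_le_sum fun i _ => hsq i).trans (le_specSq W h.1)
  rw [Finset.sum_sub_distrib, ← Finset.mul_sum, h.sum_sq_eq] at hsum
  have hcross : ∑ i, (∑ k, V i k * u k) * ∑ j, (W - V) i j * u j
      = ∑ i, (∑ k, V i k * u k) * (∑ j, W i j * u j) - lam := by
    simp only [← h.sum_sq_eq, Matrix.sub_apply, sub_mul, Finset.sum_sub_distrib, mul_sub, sq]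
  rw [h.specSq_eq, frobInner_GammaOf, hcross]
  linarith

end Spectral

section Descent

lemma two_mul_frobInner_sub_eq_neg_frobSq {V W : Matrix (Fin a) (Fin b) ℝ}
    (h : frobSq W = frobSq V) : 2 * frobInner V (W - V) = -frobSq (W - V) := by
  rw [← frobInner_self, frobInner_sub_left, frobInner_sub_right, frobInner_sub_right,
    frobInner_self, frobInner_self, frobInner_comm W V, h]
  ring

theorem Phi_normalizeCols_Gmap_add_le {f : Matrix (Fin a) (Fin b) ℝ → ℝ}
    {gradf : Matrix (Fin a) (Fin b) ℝ → Matrix (Fin a) (Fin b) ℝ} {Lf ρ L lam : ℝ}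
    {V : Matrix (Fin a) (Fin b) ℝ} {u : Fin b → ℝ}
    (hderiv : ∀ W, HasFDerivAt f (frobCLM (gradf W)) W)
    (hlip : ∀ W W', frobNorm (gradf W - gradf W') ≤ Lf * frobNorm (W - W'))
    (hρ : 0 ≤ ρ) (hρL : 0 < 2 * ρ + L) (hV : unitCols V) (htop : isTopEigen V lam u)
    (hcol : ∀ j, ∃ i, Gmap gradf ρ L V u i j ≠ 0) :
    Phi f ρ (normalizeCols (Gmap gradf ρ L V u))
        + (L - Lf) / 2 * frobSq (normalizeCols (Gmap gradf ρ L V u) - V) ≤ Phi f ρ V := by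
  set W := normalizeCols (Gmap gradf ρ L V u)
  have hproj : frobInner (gradf V) (W - V) + ρ * frobInner (GammaOf V u) (W - V)
      ≤ L * frobInner V (W - V) := by
    have hopt : 0 ≤ (2 * ρ + L)⁻¹ * frobInner (L • V - gradf V - ρ • GammaOf V u) (W - V) := by
      rw [← frobInner_smul_left, frobInner_sub_right, sub_nonneg]
      exact frobInner_le_frobInner_normalizeCols _ hV
    rw [mul_nonneg_iff_of_pos_left (inv_pos.2 hρL), frobInner_sub_left, frobInner_sub_left,
      frobInner_smul_left, frobInner_smul_left] at hopt
    linarith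
  have hsmooth := image_add_le_frobInner hderiv hlip V (W - V)
  rw [add_sub_cancel] at hsmooth
  have hspec := mul_le_mul_of_nonneg_left (htop.specSq_sub_frobInner_GammaOf_le W) hρ
  have hfrob : frobSq W = frobSq V := by
    rw [frobSq_eq_of_unitCols hV, frobSq_eq_of_unitCols (unitCols_normalizeCols _ hcol)]
  have hsphere := congrArg (L * ·) (two_mul_frobInner_sub_eq_neg_frobSq hfrob)
  simp only [Phi, hfrob] at hsphere ⊢
  linarith

lemma bddBelow_Phi_image_setOf_unitCols {f : Matrix (Fin a) (Fin b) ℝ → ℝ} {ρ : ℝ}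
    (hf : Continuous f) (hρ : 0 ≤ ρ) : BddBelow (Phi f ρ '' {V | unitCols V}) := by
  obtain ⟨c, hc⟩ := isCompact_setOf_unitCols.bddBelow_image hf.continuousOn
  refine ⟨c, ?_⟩
  rintro _ ⟨V, hV, rfl⟩
  have hfV : c ≤ f V := hc ⟨V, hV, rfl⟩
  have hpen := mul_nonneg hρ (sub_nonneg.2 (specSq_le_frobSq V))
  simp only [Phi]
  linarith

end Descent

/-- Proposition 1(ii). For the iterates of the inner solver with `L ≥ L_f̃`,
the sequence `{V^l}` is bounded, and `{Φ_ρ(V^l)}` is nonincreasing and converges to a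
finite limit. -/
theorem dcra_iterates_bounded_merit_converges (m p : ℕ)
    (ftilde : Matrix (Fin m) (Fin p) ℝ → ℝ)
    (gradf : Matrix (Fin m) (Fin p) ℝ → Matrix (Fin m) (Fin p) ℝ)
    (Lf : ℝ) (hLf : 0 < Lf)
    (hderiv : ∀ W : Matrix (Fin m) (Fin p) ℝ, HasFDerivAt ftilde (frobCLM (gradf W)) W)
    (hlip : ∀ W W' : Matrix (Fin m) (Fin p) ℝ,
      frobNorm (gradf W - gradf W') ≤ Lf * frobNorm (W - W'))
    (ρ L : ℝ) (hρ : 0 < ρ) (hL : Lf ≤ L)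
    (Vseq : ℕ → Matrix (Fin m) (Fin p) ℝ) (useq : ℕ → Fin p → ℝ) (lamseq : ℕ → ℝ)
    (hV0 : unitCols (Vseq 0))
    (htop : ∀ l, isTopEigen (Vseq l) (lamseq l) (useq l))
    (hcol : ∀ l j, ∃ i, Gmap gradf ρ L (Vseq l) (useq l) i j ≠ 0)
    (hstep : ∀ l, Vseq (l + 1) = normalizeCols (Gmap gradf ρ L (Vseq l) (useq l))) :
    (∃ Cb : ℝ, ∀ l, frobNorm (Vseq l) ≤ Cb) ∧
    (∀ l, Phi ftilde ρ (Vseq (l + 1)) ≤ Phi ftilde ρ (Vseq l)) ∧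
    (∃ c : ℝ, Filter.Tendsto (fun l => Phi ftilde ρ (Vseq l)) Filter.atTop (nhds c)) := by
  have hunit : ∀ l, unitCols (Vseq l) := by
    intro l
    induction l with
    | zero => exact hV0
    | succ l _ => rw [hstep l]; exact unitCols_normalizeCols _ (hcol l)
  have hdesc : ∀ l, Phi ftilde ρ (Vseq (l + 1)) ≤ Phi ftilde ρ (Vseq l) := by
    intro l
    have hdec := Phi_normalizeCols_Gmap_add_le hderiv hlip hρ.le (by linarith) (hunit l) (htop l)
      (hcol l)
    rw [← hstep l] at hdec
    have hgain := mul_nonneg (by linarith : 0 ≤ (L - Lf) / 2)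
      (frobSq_nonneg (Vseq (l + 1) - Vseq l))
    linarith
  have hbdd := bddBelow_Phi_image_setOf_unitCols
    (continuous_iff_continuousAt.2 fun W => (hderiv W).continuousAt) hρ.le
  refine ⟨⟨√p, fun l => by rw [frobNorm, frobSq_eq_of_unitCols (hunit l)]⟩, hdesc, _,
    tendsto_atTop_ciInf (antitone_nat_of_succ_le hdesc) (hbdd.mono ?_)⟩
  rintro _ ⟨l, rfl⟩
  exact ⟨_, hunit l, rfl⟩
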